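/- For a weak almost C-structure (f, Q, ξ_i, η^i, g), the tensors N^(2)_i and N^(4)_{ij} vanish for all i, j, the tensor N^(1) coincides with the Nijenhuis torsion [f, f], and [ξ_i, ξ_j] = 0 for all 1 ≤ i, j ≤ p; in particular, the characteristic distribution ker f is tangent to a totally geodesic foliation. Moreover, N^(3)_i = 0 for all 1 ≤ i ≤ p if and only if each ξ_i is a Killing vector field. -/

import Mathlib

/-!
An algebraic model of the calculus of smooth vector fields on a smooth manifold
`M^{2n+p}`: `F` plays the role of the ordered commutative `ℝ`-algebra `C^∞(M)` of
smooth real-valued functions, and `V` the `F`-module `𝔛(M)` of smooth vector fields,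
equipped with the derivation action `D` of vector fields on functions, the Lie
bracket of vector fields, a Riemannian metric `g` (a symmetric, `F`-bilinear,
positive-definite form) and its Levi-Civita connection `nabla` (the unique metric,
torsion-free affine connection of `g`).
-/

noncomputable section

structure RiemannCalculus (F V : Type*) [CommRing F] [PartialOrder F] [IsOrderedRing F] [Algebra ℝ F]
    [AddCommGroup V] [Module F V] where
  /-- the derivation action `X φ` of a vector field `X` on a function `φ` -/
  D : V → F → F
  D_add_left : ∀ X Y φ, D (X + Y) φ = D X φ + D Y φ
  D_smul_left : ∀ (ψ : F) (X : V) (φ : F), D (ψ • X) φ = ψ * D X φ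
  D_add_right : ∀ (X : V) (φ ψ : F), D X (φ + ψ) = D X φ + D X ψ
  D_mul_right : ∀ (X : V) (φ ψ : F), D X (φ * ψ) = φ * D X ψ + ψ * D X φ
  D_algebraMap : ∀ (X : V) (r : ℝ), D X (algebraMap ℝ F r) = 0
  /-- the Lie bracket `[X, Y]` of vector fields -/
  bracket : V → V → V
  bracket_add_left : ∀ X Y Z, bracket (X + Y) Z = bracket X Z + bracket Y Z
  bracket_antisymm : ∀ X Y, bracket X Y = -bracket Y X
  bracket_leibniz : ∀ (X : V) (φ : F) (Y : V),
    bracket X (φ • Y) = φ • bracket X Y + D X φ • Y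
  bracket_jacobi : ∀ X Y Z,
    bracket X (bracket Y Z) = bracket (bracket X Y) Z + bracket Y (bracket X Z)
  D_bracket : ∀ X Y φ, D (bracket X Y) φ = D X (D Y φ) - D Y (D X φ)
  /-- the Riemannian metric `g` -/
  g : V → V → F
  g_symm : ∀ X Y, g X Y = g Y X
  g_add_left : ∀ X Y Z, g (X + Y) Z = g X Z + g Y Z
  g_smul_left : ∀ (φ : F) (X Y : V), g (φ • X) Y = φ * g X Y
  g_nonneg : ∀ X, 0 ≤ g X X
  g_definite : ∀ X, g X X = 0 → X = 0
  /-- the Levi-Civita connection `∇` of `g` -/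
  nabla : V → V → V
  nabla_add_left : ∀ X Y Z, nabla (X + Y) Z = nabla X Z + nabla Y Z
  nabla_smul_left : ∀ (φ : F) (X Y : V), nabla (φ • X) Y = φ • nabla X Y
  nabla_add_right : ∀ X Y Z, nabla X (Y + Z) = nabla X Y + nabla X Z
  nabla_leibniz : ∀ (X : V) (φ : F) (Y : V),
    nabla X (φ • Y) = φ • nabla X Y + D X φ • Y
  nabla_metric : ∀ X Y Z, D X (g Y Z) = g (nabla X Y) Z + g Y (nabla X Z)
  nabla_torsion_free : ∀ X Y, nabla X Y - nabla Y X = bracket X Y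

/-- A metric weak `f`-structure `(f, Q, ξ_i, η^i, g)` on a smooth manifold `M^{2n+p}`
(Rovenski–Wolak): `f` is a `(1,1)`-tensor field of rank `2n`, `Q` a nonsingular
`(1,1)`-tensor field, `ξ_1, …, ξ_p` vector fields spanning `ker f`, and `η^1, …, η^p`
the dual `1`-forms, satisfying `f³ + f∘Q = 0`, `Q ξᵢ = ξᵢ`,
`f² = -Q + Σᵢ ηⁱ ⊗ ξᵢ`, `ηⁱ(ξⱼ) = δⁱⱼ`, together with a compatible Riemannian
metric: `g(fX, fY) = g(X, QY) - Σᵢ ηⁱ(X) ηⁱ(QY)`. -/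
structure MetricWeakFStructure (p : ℕ) (F V : Type*) [CommRing F] [PartialOrder F] [IsOrderedRing F] [Algebra ℝ F]
    [AddCommGroup V] [Module F V] extends RiemannCalculus F V where
  f : V →ₗ[F] V
  Q : V →ₗ[F] V
  ξ : Fin p → V
  η : Fin p → V →ₗ[F] F
  Q_nonsingular : Function.Bijective Q
  f_cubed : ∀ X, f (f (f X)) + f (Q X) = 0
  Q_xi : ∀ i, Q (ξ i) = ξ i
  f_squared : ∀ X, f (f X) = -Q X + ∑ i, η i X • ξ i
  eta_xi : ∀ i j, η i (ξ j) = if i = j then (1 : F) else 0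
  /-- the `ηⁱ` are the coframe dual to the `ξᵢ` w.r.t. the splitting
  `TM = f(TM) ⊕ ker f` (equivalently, `ηⁱ ∘ f = 0`). -/
  eta_Q : ∀ i X, η i (Q X) = η i X
  /-- the `ξᵢ` span `ker f` -/
  ker_f_spanned : ∀ X, f X = 0 → X ∈ Submodule.span F (Set.range ξ)
  compatible : ∀ X Y, g (f X) (f Y) = g X (Q Y) - ∑ i, η i X * η i (Q Y)

namespace MetricWeakFStructure

variable {p : ℕ} {F V : Type*} [CommRing F] [PartialOrder F] [IsOrderedRing F] [Algebra ℝ F]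
  [AddCommGroup V] [Module F V] (S : MetricWeakFStructure p F V)

/-- the fundamental 2-form `Φ(X,Y) = g(X, fY)` -/
def Phi (X Y : V) : F := S.g X (S.f Y)

/-- `dηⁱ(X,Y) = (1/2){X(ηⁱ(Y)) - Y(ηⁱ(X)) - ηⁱ([X,Y])}` -/
def dEta (i : Fin p) (X Y : V) : F :=
  algebraMap ℝ F (1 / 2) *
    (S.D X (S.η i Y) - S.D Y (S.η i X) - S.η i (S.bracket X Y))

/-- `dΦ(X,Y,Z) = (1/3){XΦ(Y,Z) + YΦ(Z,X) + ZΦ(X,Y) - Φ([X,Y],Z) - Φ([Z,X],Y) - Φ([Y,Z],X)}` -/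
def dPhi (X Y Z : V) : F :=
  algebraMap ℝ F (1 / 3) *
    (S.D X (S.Phi Y Z) + S.D Y (S.Phi Z X) + S.D Z (S.Phi X Y)
      - S.Phi (S.bracket X Y) Z - S.Phi (S.bracket Z X) Y - S.Phi (S.bracket Y Z) X)

/-- the Nijenhuis torsion `[f,f](X,Y) = f²[X,Y] + [fX,fY] - f[fX,Y] - f[X,fY]` -/
def nijenhuis (X Y : V) : V :=
  S.f (S.f (S.bracket X Y)) + S.bracket (S.f X) (S.f Y)
    - S.f (S.bracket (S.f X) Y) - S.f (S.bracket X (S.f Y))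

/-- `N⁽¹⁾ = [f,f] + 2 Σᵢ dηⁱ ⊗ ξᵢ` -/
def N1 (X Y : V) : V := S.nijenhuis X Y + ∑ i, (2 * S.dEta i X Y) • S.ξ i

/-- the Lie derivative of `f`: `(£_Z f)X = [Z, fX] - f[Z,X]` -/
def lieD_f (Z X : V) : V := S.bracket Z (S.f X) - S.f (S.bracket Z X)

/-- the Lie derivative of `ηʲ`: `(£_Z ηʲ)X = Z(ηʲ(X)) - ηʲ([Z,X])` -/
def lieD_eta (j : Fin p) (Z X : V) : F := S.D Z (S.η j X) - S.η j (S.bracket Z X)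

/-- the Lie derivative of `g`: `(£_Z g)(X,Y) = Z(g(X,Y)) - g([Z,X],Y) - g(X,[Z,Y])` -/
def lieD_g (Z X Y : V) : F :=
  S.D Z (S.g X Y) - S.g (S.bracket Z X) Y - S.g X (S.bracket Z Y)

/-- `N⁽²⁾ᵢ(X,Y) = (£_{fX} ηⁱ)Y - (£_{fY} ηⁱ)X` -/
def N2 (i : Fin p) (X Y : V) : F := S.lieD_eta i (S.f X) Y - S.lieD_eta i (S.f Y) X

/-- `N⁽³⁾ᵢ = £_{ξᵢ} f` -/
def N3 (i : Fin p) (X : V) : V := S.lieD_f (S.ξ i) X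

/-- `N⁽⁴⁾ᵢⱼ = £_{ξᵢ} ηʲ` -/
def N4 (i j : Fin p) (X : V) : F := S.lieD_eta j (S.ξ i) X

/-- `Q̃ = Q - id` -/
def Qt (X : V) : V := S.Q X - X

/-- `X^⊤ = X - Σᵢ ηⁱ(X) ξᵢ`, the `f(TM)`-component of `X` -/
def top (X : V) : V := X - ∑ i, S.η i X • S.ξ i

/-- `N⁽⁵⁾(X,Y,Z) = (fZ)(g(X^⊤,Q̃Y)) - (fY)(g(X^⊤,Q̃Z)) + g([X,fZ]^⊤,Q̃Y)
  - g([X,fY]^⊤,Q̃Z) + g([Y,fZ]^⊤ - [Z,fY]^⊤ - f[Y,Z], Q̃X)` -/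
def N5 (X Y Z : V) : F :=
  S.D (S.f Z) (S.g (S.top X) (S.Qt Y)) - S.D (S.f Y) (S.g (S.top X) (S.Qt Z))
    + S.g (S.top (S.bracket X (S.f Z))) (S.Qt Y)
    - S.g (S.top (S.bracket X (S.f Y))) (S.Qt Z)
    + S.g (S.top (S.bracket Y (S.f Z)) - S.top (S.bracket Z (S.f Y))
        - S.f (S.bracket Y Z)) (S.Qt X)

/-- the covariant derivative of `f`: `(∇_X f)Y = ∇_X(fY) - f(∇_X Y)` -/
def nablaF (X Y : V) : V := S.nabla X (S.f Y) - S.f (S.nabla X Y)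

/-- `hᵢ = (1/2) £_{ξᵢ} f` -/
def hT (i : Fin p) (X : V) : V := algebraMap ℝ F (1 / 2) • S.N3 i X

/-- a vector field `Z` is Killing if `£_Z g = 0` -/
def IsKilling (Z : V) : Prop := ∀ X Y : V, S.lieD_g Z X Y = 0

/-- the structure is normal if `N⁽¹⁾ = 0` -/
def Normal : Prop := ∀ X Y : V, S.N1 X Y = 0

/-- a weak K-structure: normal with `dΦ = 0` -/
def WeakK : Prop := S.Normal ∧ ∀ X Y Z : V, S.dPhi X Y Z = 0

/-- a weak almost S-structure: `dηⁱ = Φ` for all `i` -/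
def WeakAlmostS : Prop := ∀ (i : Fin p) (X Y : V), S.dEta i X Y = S.Phi X Y

/-- a weak S-structure: a weak K-structure with `dηⁱ = Φ` for all `i` -/
def WeakS : Prop := S.WeakK ∧ S.WeakAlmostS

/-- a weak almost C-structure: `dΦ = 0` and `dηⁱ = 0` for all `i` -/
def WeakAlmostC : Prop :=
  (∀ X Y Z : V, S.dPhi X Y Z = 0) ∧ ∀ (i : Fin p) (X Y : V), S.dEta i X Y = 0

/-- a weak C-structure: a weak K-structure with `dηⁱ = 0` for all `i` -/
def WeakC : Prop := S.WeakK ∧ ∀ (i : Fin p) (X Y : V), S.dEta i X Y = 0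

end MetricWeakFStructure
namespace MetricWeakFStructure

variable {p : ℕ} {F V : Type*} [CommRing F] [PartialOrder F] [IsOrderedRing F] [Algebra ℝ F]
  [AddCommGroup V] [Module F V] (S : MetricWeakFStructure p F V)

/-! ### Elementary consequences of the axioms -/

lemma D_zero (X : V) : S.D X 0 = 0 := by
  have := S.D_algebraMap X 0
  simpa using this

lemma D_one (X : V) : S.D X 1 = 0 := by
  have := S.D_algebraMap X 1
  simpa using this

lemma D_neg (X : V) (φ : F) : S.D X (-φ) = -S.D X φ := by
  have h := S.D_add_right X φ (-φ)
  rw [add_neg_cancel, S.D_zero] at h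
  linear_combination -h

lemma D_sub (X : V) (φ ψ : F) : S.D X (φ - ψ) = S.D X φ - S.D X ψ := by
  rw [sub_eq_add_neg, S.D_add_right, S.D_neg, sub_eq_add_neg]

lemma D_sum {ι : Type*} (X : V) (s : Finset ι) (φ : ι → F) :
    S.D X (∑ i ∈ s, φ i) = ∑ i ∈ s, S.D X (φ i) := by
  classical
  induction s using Finset.induction_on with
  | empty => simpa using S.D_zero X
  | insert _ _ h ih => rw [Finset.sum_insert h, Finset.sum_insert h, S.D_add_right, ih]

lemma g_zero_left (X : V) : S.g 0 X = 0 := by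
  have := S.g_smul_left 0 0 X
  simpa using this

lemma g_zero_right (X : V) : S.g X 0 = 0 := by
  rw [S.g_symm, S.g_zero_left]

lemma g_add_right (X Y Z : V) : S.g X (Y + Z) = S.g X Y + S.g X Z := by
  rw [S.g_symm, S.g_add_left, S.g_symm Y X, S.g_symm Z X]

lemma g_smul_right (φ : F) (X Y : V) : S.g X (φ • Y) = φ * S.g X Y := by
  rw [S.g_symm, S.g_smul_left, S.g_symm]

lemma g_neg_left (X Y : V) : S.g (-X) Y = -S.g X Y := by
  have : ((-1 : F) • X) = -X := by simp
  rw [← this, S.g_smul_left]; ring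

lemma g_neg_right (X Y : V) : S.g X (-Y) = -S.g X Y := by
  rw [S.g_symm, S.g_neg_left, S.g_symm]

lemma g_sub_left (X Y Z : V) : S.g (X - Y) Z = S.g X Z - S.g Y Z := by
  rw [sub_eq_add_neg, S.g_add_left, S.g_neg_left, sub_eq_add_neg]

lemma g_sub_right (X Y Z : V) : S.g X (Y - Z) = S.g X Y - S.g X Z := by
  rw [S.g_symm, S.g_sub_left, S.g_symm Y X, S.g_symm Z X]

lemma g_sum_right {ι : Type*} (X : V) (s : Finset ι) (v : ι → V) :
    S.g X (∑ i ∈ s, v i) = ∑ i ∈ s, S.g X (v i) := by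
  classical
  induction s using Finset.induction_on with
  | empty => simpa using S.g_zero_right X
  | insert _ _ h ih => rw [Finset.sum_insert h, Finset.sum_insert h, S.g_add_right, ih]

lemma g_sum_left {ι : Type*} (X : V) (s : Finset ι) (v : ι → V) :
    S.g (∑ i ∈ s, v i) X = ∑ i ∈ s, S.g (v i) X := by
  rw [S.g_symm, S.g_sum_right]
  exact Finset.sum_congr rfl fun i _ => S.g_symm X (v i)

lemma bracket_add_right (X Y Z : V) : S.bracket X (Y + Z) = S.bracket X Y + S.bracket X Z := by
  rw [S.bracket_antisymm, S.bracket_add_left, S.bracket_antisymm Y X, S.bracket_antisymm Z X]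
  abel

/-! ### Cancellation lemmas (using the `ℝ`-algebra structure) -/

lemma half_mul_two : (algebraMap ℝ F (1 / 2)) * 2 = 1 := by
  rw [show (2 : F) = algebraMap ℝ F 2 from (map_ofNat (algebraMap ℝ F) 2).symm, ← map_mul]
  norm_num

lemma third_mul_three : (algebraMap ℝ F (1 / 3)) * 3 = 1 := by
  rw [show (3 : F) = algebraMap ℝ F 3 from (map_ofNat (algebraMap ℝ F) 3).symm, ← map_mul]
  norm_num

lemma cancel_half {x : F} (h : algebraMap ℝ F (1 / 2) * x = 0) : x = 0 := by
  have h2 := half_mul_two (F := F)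
  linear_combination 2 * h - x * h2

lemma cancel_third {x : F} (h : algebraMap ℝ F (1 / 3) * x = 0) : x = 0 := by
  have h3 := third_mul_three (F := F)
  linear_combination 3 * h - x * h3

lemma cancel_double {x : F} (h : x + x = 0) : x = 0 := by
  have h2 := half_mul_two (F := F)
  linear_combination algebraMap ℝ F (1 / 2) * h - x * h2

lemma cancel_double_smul {F' V' : Type*} [CommRing F'] [PartialOrder F'] [IsOrderedRing F'] [Algebra ℝ F']
    [AddCommGroup V'] [Module F' V'] {x : V'} (h : x + x = 0) : x = 0 := by
  have : algebraMap ℝ F' (1 / 2) • (x + x) = x := by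
    rw [← two_smul F' x, smul_smul, half_mul_two, one_smul]
  rw [h, smul_zero] at this
  exact this.symm


/-! ### Structural identities of a metric weak f-structure -/

lemma eta_sum_xi (i : Fin p) (c : Fin p → F) :
    S.η i (∑ j, c j • S.ξ j) = c i := by
  rw [map_sum]
  have : ∀ j, S.η i (c j • S.ξ j) = if j = i then c i else 0 := by
    intro j
    rw [map_smul, S.eta_xi, smul_eq_mul]
    by_cases h : j = i
    · simp [h, if_pos rfl]
    · rw [if_neg (fun hh => h hh.symm), if_neg h, mul_zero]
  rw [Finset.sum_congr rfl (fun j _ => this j), Finset.sum_ite_eq' Finset.univ i]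
  simp

lemma sum_eta_xi_smul (i : Fin p) : (∑ j, S.η j (S.ξ i) • S.ξ j) = S.ξ i := by
  have : ∀ j, S.η j (S.ξ i) • S.ξ j = if j = i then S.ξ i else 0 := by
    intro j
    rw [S.eta_xi]
    by_cases h : j = i
    · simp [h]
    · simp [h]
  rw [Finset.sum_congr rfl (fun j _ => this j), Finset.sum_ite_eq' Finset.univ i]
  simp

lemma f_xi (i : Fin p) : S.f (S.ξ i) = 0 := by
  have h2 : S.f (S.f (S.ξ i)) = 0 := by
    rw [S.f_squared, S.Q_xi, S.sum_eta_xi_smul, neg_add_cancel]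
  have h3 := S.f_cubed (S.ξ i)
  rw [S.Q_xi] at h3
  have h4 : S.f (S.f (S.f (S.ξ i))) = 0 := by rw [h2, map_zero]
  rw [h4, zero_add] at h3
  exact h3

lemma g_xi (i : Fin p) (X : V) : S.g (S.ξ i) X = S.η i X := by
  have key : ∀ Y, S.g (S.ξ i) (S.Q Y) = S.η i Y := by
    intro Y
    have h := S.compatible (S.ξ i) Y
    rw [S.f_xi, S.g_zero_left] at h
    have hs : (∑ j, S.η j (S.ξ i) * S.η j (S.Q Y)) = S.η i Y := by
      have : ∀ j, S.η j (S.ξ i) * S.η j (S.Q Y) = if j = i then S.η i Y else 0 := by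
        intro j
        rw [S.eta_xi]
        by_cases hh : j = i
        · rw [if_pos hh, if_pos hh, one_mul, hh, S.eta_Q]
        · rw [if_neg hh, if_neg hh, zero_mul]
      rw [Finset.sum_congr rfl (fun j _ => this j), Finset.sum_ite_eq' Finset.univ i]
      simp
    rw [hs] at h
    linear_combination -h
  obtain ⟨Y, rfl⟩ := S.Q_nonsingular.2 X
  rw [key, S.eta_Q]

lemma eta_f (i : Fin p) (X : V) : S.η i (S.f X) = 0 := by
  have hQ : ∀ X, S.η i (S.f (S.Q X)) = 0 := by
    intro X
    have h1 := S.f_cubed X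
    have h2 := S.f_squared (S.f X)
    have h3 : -S.f (S.Q X) = -S.Q (S.f X) + ∑ j, S.η j (S.f X) • S.ξ j := by
      rw [← h2]; linear_combination (norm := module) -h1
    have h4 := congrArg (S.η i) h3
    rw [map_neg, map_add, map_neg, S.eta_Q, S.eta_sum_xi] at h4
    linear_combination -h4
  obtain ⟨Y, rfl⟩ := S.Q_nonsingular.2 X
  exact hQ Y

lemma fQ_comm (X : V) : S.f (S.Q X) = S.Q (S.f X) := by
  have h1 := S.f_cubed X
  have h2 := S.f_squared (S.f X)
  have h3 : -S.f (S.Q X) = -S.Q (S.f X) + ∑ j, S.η j (S.f X) • S.ξ j := by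
    rw [← h2]; linear_combination (norm := module) -h1
  have hs : (∑ j, S.η j (S.f X) • S.ξ j) = 0 := by
    rw [Finset.sum_eq_zero]
    intro j _
    rw [S.eta_f, zero_smul]
  rw [hs, add_zero, neg_inj] at h3
  exact h3

lemma g_f_skew (X Y : V) : S.g (S.f X) Y = -S.g X (S.f Y) := by
  have key : ∀ W, S.g (S.f X) (S.Q W) = -S.g X (S.f (S.Q W)) := by
    intro W
    have h := S.compatible X (S.f W)
    have hsum : (∑ j, S.η j X * S.η j (S.Q (S.f W))) = 0 := by
      rw [Finset.sum_eq_zero]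
      intro j _
      rw [S.eta_Q, S.eta_f, mul_zero]
    rw [hsum, sub_zero] at h
    -- h : g (f X) (f (f W)) = g X (Q (f W))
    have hff : S.f (S.f W) = -S.Q W + ∑ j, S.η j W • S.ξ j := S.f_squared W
    rw [hff, S.g_add_right, S.g_neg_right, S.g_sum_right] at h
    have hs2 : (∑ j, S.g (S.f X) (S.η j W • S.ξ j)) = 0 := by
      rw [Finset.sum_eq_zero]
      intro j _
      rw [S.g_smul_right, S.g_symm, S.g_xi, S.eta_f, mul_zero]
    rw [hs2, add_zero] at h
    -- h : -g (f X) (Q W) = g X (Q (f W))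
    rw [← S.fQ_comm] at h
    linear_combination -h
  obtain ⟨W, rfl⟩ := S.Q_nonsingular.2 Y
  exact key W

lemma g_xi_right (i : Fin p) (X : V) : S.g X (S.ξ i) = S.η i X := by
  rw [S.g_symm, S.g_xi]

/-- every element of `ker f` is the canonical combination of the `ξ i` -/
lemma span_repr {X : V} (hX : S.f X = 0) : X = ∑ i, S.η i X • S.ξ i := by
  have h := S.ker_f_spanned X hX
  have main : ∀ Y ∈ Submodule.span F (Set.range S.ξ), Y = ∑ i, S.η i Y • S.ξ i := by
    intro Y hY
    induction hY using Submodule.span_induction with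
    | mem x hx =>
      obtain ⟨j, rfl⟩ := hx
      exact (S.sum_eta_xi_smul j).symm
    | zero => simp
    | add x y _ _ hx hy =>
      have he : ∀ i, S.η i (x + y) • S.ξ i = S.η i x • S.ξ i + S.η i y • S.ξ i :=
        fun i => by rw [map_add, add_smul]
      rw [Finset.sum_congr rfl (fun i _ => he i), Finset.sum_add_distrib, ← hx, ← hy]
    | smul a x _ hx =>
      have he : ∀ i, S.η i (a • x) • S.ξ i = a • (S.η i x • S.ξ i) :=
        fun i => by rw [map_smul, smul_eq_mul, smul_smul]
      rw [Finset.sum_congr rfl (fun i _ => he i), ← Finset.smul_sum, ← hx]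
  exact main X h


lemma g_ker {X : V} (hX : S.f X = 0) (U : V) :
    S.g X U = ∑ i, S.η i X * S.η i U := by
  nth_rewrite 1 [S.span_repr hX]
  rw [S.g_sum_left]
  exact Finset.sum_congr rfl fun i _ => by rw [S.g_smul_left, S.g_xi]

lemma f_eq_zero_of_g {X : V} (h : ∀ Z, S.g X (S.f Z) = 0) : S.f X = 0 := by
  apply S.g_definite
  have hc := S.compatible X X
  have hQ : S.Q X = (∑ i, S.η i X • S.ξ i) - S.f (S.f X) := by
    have := S.f_squared X
    linear_combination (norm := module) this
  have hg : S.g X (S.Q X) = ∑ i, S.η i X * S.η i X := by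
    rw [hQ, S.g_sub_right, S.g_sum_right, h (S.f X), sub_zero]
    exact Finset.sum_congr rfl fun i _ => by rw [S.g_smul_right, S.g_xi_right]
  have hs : (∑ i, S.η i X * S.η i (S.Q X)) = ∑ i, S.η i X * S.η i X := by
    exact Finset.sum_congr rfl fun i _ => by rw [S.eta_Q]
  rw [hg, hs, sub_self] at hc
  exact hc

lemma eq_zero_of_g_eta {X : V} (h : ∀ Z, S.g X (S.f Z) = 0)
    (he : ∀ j, S.η j X = 0) : X = 0 := by
  have hf := S.f_eq_zero_of_g h
  rw [S.span_repr hf, Finset.sum_eq_zero]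
  intro j _
  rw [he j, zero_smul]

/-- symmetrized Koszul formula -/
lemma koszul (X Y Z : V) :
    S.g (S.nabla X Y + S.nabla Y X) Z =
      S.D X (S.g Y Z) + S.D Y (S.g X Z) - S.D Z (S.g X Y)
        - S.g Y (S.bracket X Z) - S.g X (S.bracket Y Z) := by
  rw [S.nabla_metric X Y Z, S.nabla_metric Y X Z, S.nabla_metric Z X Y,
    ← S.nabla_torsion_free X Z, ← S.nabla_torsion_free Y Z,
    S.g_sub_right, S.g_sub_right, S.g_add_left]
  rw [S.g_symm Y (S.nabla X Z), S.g_symm X (S.nabla Y Z),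
    S.g_symm X (S.nabla Z Y), S.g_symm Y (S.nabla Z X)]
  ring

/-- the Lie derivative of the metric via the connection -/
lemma lieg_nabla (Z X Y : V) :
    S.lieD_g Z X Y = S.g (S.nabla X Z) Y + S.g (S.nabla Y Z) X := by
  unfold lieD_g
  rw [S.nabla_metric Z X Y, ← S.nabla_torsion_free Z X, ← S.nabla_torsion_free Z Y,
    S.g_sub_left, S.g_sub_right, S.g_symm X (S.nabla Z Y), S.g_symm X (S.nabla Y Z)]
  ring


/-! ### Consequences of `dη = 0` and `dΦ = 0` -/

lemma eta_bracket (hη : ∀ (i : Fin p) (X Y : V), S.dEta i X Y = 0)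
    (i : Fin p) (X Y : V) :
    S.η i (S.bracket X Y) = S.D X (S.η i Y) - S.D Y (S.η i X) := by
  have h0 : algebraMap ℝ F (1 / 2) *
      (S.D X (S.η i Y) - S.D Y (S.η i X) - S.η i (S.bracket X Y)) = 0 := hη i X Y
  have h := cancel_half (F := F) h0
  linear_combination -h

lemma eta_bracket_f (hη : ∀ (i : Fin p) (X Y : V), S.dEta i X Y = 0)
    (i : Fin p) (X Z : V) :
    S.η i (S.bracket X (S.f Z)) = -S.D (S.f Z) (S.η i X) := by
  rw [S.eta_bracket hη, S.eta_f, S.D_zero, zero_sub]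

lemma dphi6 (hΦ : ∀ X Y Z : V, S.dPhi X Y Z = 0) (X Y Z : V) :
    S.D X (S.g Y (S.f Z)) + S.D Y (S.g Z (S.f X)) + S.D Z (S.g X (S.f Y))
      - S.g (S.bracket X Y) (S.f Z) - S.g (S.bracket Z X) (S.f Y)
      - S.g (S.bracket Y Z) (S.f X) = 0 := by
  have h0 : algebraMap ℝ F (1 / 3) *
      (S.D X (S.g Y (S.f Z)) + S.D Y (S.g Z (S.f X)) + S.D Z (S.g X (S.f Y))
        - S.g (S.bracket X Y) (S.f Z) - S.g (S.bracket Z X) (S.f Y)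
        - S.g (S.bracket Y Z) (S.f X)) = 0 := hΦ X Y Z
  exact cancel_third (F := F) h0

lemma D_eta_xi (X : V) (i j : Fin p) : S.D X (S.η i (S.ξ j)) = 0 := by
  rw [S.eta_xi]
  by_cases h : i = j
  · rw [if_pos h]; exact S.D_one X
  · rw [if_neg h]; exact S.D_zero X

lemma bracket_xi (hη : ∀ (i : Fin p) (X Y : V), S.dEta i X Y = 0)
    (hΦ : ∀ X Y Z : V, S.dPhi X Y Z = 0) (i j : Fin p) :
    S.bracket (S.ξ i) (S.ξ j) = 0 := by
  apply S.eq_zero_of_g_eta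
  · intro Z
    have h := S.dphi6 hΦ Z (S.ξ i) (S.ξ j)
    simp only [S.f_xi, S.g_zero_right, S.D_zero] at h
    have h2 : S.g (S.ξ j) (S.f Z) = 0 := by rw [S.g_xi, S.eta_f]
    rw [h2, S.D_zero] at h
    linear_combination -h
  · intro k
    rw [S.eta_bracket hη, S.D_eta_xi, S.D_eta_xi, sub_self]

lemma tot_geo (hη : ∀ (i : Fin p) (X Y : V), S.dEta i X Y = 0)
    (hΦ : ∀ X Y Z : V, S.dPhi X Y Z = 0) {X Y : V}
    (hX : S.f X = 0) (hY : S.f Y = 0) :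
    S.f (S.nabla X Y + S.nabla Y X) = 0 := by
  apply S.f_eq_zero_of_g
  intro Z
  rw [S.koszul]
  -- from dΦ = 0:  D X (g Y (f Z)) = g [X,Y] (f Z)
  have hA : S.D X (S.g Y (S.f Z)) = S.g (S.bracket X Y) (S.f Z) := by
    have h := S.dphi6 hΦ X Y Z
    simp only [hX, hY, S.g_zero_right, S.D_zero] at h
    linear_combination h
  have hB : S.D Y (S.g X (S.f Z)) = S.g (S.bracket Y X) (S.f Z) := by
    have h := S.dphi6 hΦ Y X Z
    simp only [hX, hY, S.g_zero_right, S.D_zero] at h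
    linear_combination h
  have hBB : S.g (S.bracket Y X) (S.f Z) = -S.g (S.bracket X Y) (S.f Z) := by
    rw [S.bracket_antisymm Y X, S.g_neg_left]
  -- the remaining three terms via the kernel expansion
  have hgXY : S.D (S.f Z) (S.g X Y) =
      ∑ i, (S.η i X * S.D (S.f Z) (S.η i Y) + S.η i Y * S.D (S.f Z) (S.η i X)) := by
    rw [S.g_ker hX Y, S.D_sum]
    exact Finset.sum_congr rfl fun i _ => S.D_mul_right _ _ _
  have hXbr : S.g X (S.bracket Y (S.f Z)) = -∑ i, S.η i X * S.D (S.f Z) (S.η i Y) := by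
    rw [S.g_ker hX, ← Finset.sum_neg_distrib]
    exact Finset.sum_congr rfl fun i _ => by
      rw [S.eta_bracket_f hη, mul_neg]
  have hYbr : S.g Y (S.bracket X (S.f Z)) = -∑ i, S.η i Y * S.D (S.f Z) (S.η i X) := by
    rw [S.g_ker hY, ← Finset.sum_neg_distrib]
    exact Finset.sum_congr rfl fun i _ => by
      rw [S.eta_bracket_f hη, mul_neg]
  rw [hA, hB, hBB, hgXY, hXbr, hYbr, Finset.sum_add_distrib]
  ring


lemma nabla_xi_xi (hη : ∀ (i : Fin p) (X Y : V), S.dEta i X Y = 0)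
    (hΦ : ∀ X Y Z : V, S.dPhi X Y Z = 0) (i j : Fin p) :
    S.nabla (S.ξ i) (S.ξ j) = 0 := by
  have hsym : ∀ a b, S.nabla (S.ξ a) (S.ξ b) = S.nabla (S.ξ b) (S.ξ a) := by
    intro a b
    have h := S.nabla_torsion_free (S.ξ a) (S.ξ b)
    rw [S.bracket_xi hη hΦ, sub_eq_zero] at h
    exact h
  have hf : ∀ a b, S.f (S.nabla (S.ξ a) (S.ξ b)) = 0 := by
    intro a b
    have h := S.tot_geo hη hΦ (S.f_xi a) (S.f_xi b)
    rw [hsym b a, map_add] at h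
    exact cancel_double_smul (F' := F) h
  have hBanti : ∀ a b c, S.g (S.nabla (S.ξ a) (S.ξ b)) (S.ξ c)
      = -S.g (S.nabla (S.ξ a) (S.ξ c)) (S.ξ b) := by
    intro a b c
    have h := S.nabla_metric (S.ξ a) (S.ξ b) (S.ξ c)
    rw [S.g_xi, S.D_eta_xi, S.g_symm (S.ξ b) (S.nabla (S.ξ a) (S.ξ c))] at h
    linear_combination -h
  have hBsym : ∀ a b c, S.g (S.nabla (S.ξ a) (S.ξ b)) (S.ξ c)
      = S.g (S.nabla (S.ξ b) (S.ξ a)) (S.ξ c) := by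
    intro a b c; rw [hsym a b]
  have hB0 : ∀ a b c, S.g (S.nabla (S.ξ a) (S.ξ b)) (S.ξ c) = 0 := by
    intro a b c
    have h1 : S.g (S.nabla (S.ξ a) (S.ξ b)) (S.ξ c)
        = -S.g (S.nabla (S.ξ a) (S.ξ b)) (S.ξ c) := by
      calc S.g (S.nabla (S.ξ a) (S.ξ b)) (S.ξ c)
          = S.g (S.nabla (S.ξ b) (S.ξ a)) (S.ξ c) := hBsym a b c
        _ = -S.g (S.nabla (S.ξ b) (S.ξ c)) (S.ξ a) := hBanti b a c
        _ = -S.g (S.nabla (S.ξ c) (S.ξ b)) (S.ξ a) := by rw [hBsym b c a]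
        _ = S.g (S.nabla (S.ξ c) (S.ξ a)) (S.ξ b) := by rw [hBanti c b a, neg_neg]
        _ = S.g (S.nabla (S.ξ a) (S.ξ c)) (S.ξ b) := by rw [hBsym c a b]
        _ = -S.g (S.nabla (S.ξ a) (S.ξ b)) (S.ξ c) := hBanti a c b
    exact cancel_double (F := F) (by linear_combination h1)
  rw [S.span_repr (hf i j), Finset.sum_eq_zero]
  intro k _
  have hk : S.η k (S.nabla (S.ξ i) (S.ξ j)) = 0 := by
    rw [← S.g_xi, S.g_symm]; exact hB0 i j k
  rw [hk, zero_smul]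

lemma nabla_sym (hη : ∀ (i : Fin p) (X Y : V), S.dEta i X Y = 0)
    (i : Fin p) (X Y : V) :
    S.g (S.nabla X (S.ξ i)) Y = S.g (S.nabla Y (S.ξ i)) X := by
  have h1 : S.g (S.ξ i) (S.bracket X Y)
      = S.D X (S.g (S.ξ i) Y) - S.D Y (S.g (S.ξ i) X) := by
    rw [S.g_xi, S.g_xi, S.g_xi]; exact S.eta_bracket hη i X Y
  rw [← S.nabla_torsion_free, S.g_sub_right, S.nabla_metric X (S.ξ i) Y,
    S.nabla_metric Y (S.ξ i) X] at h1
  linear_combination -h1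

lemma g_nabla_xi_xi (hη : ∀ (i : Fin p) (X Y : V), S.dEta i X Y = 0)
    (hΦ : ∀ X Y Z : V, S.dPhi X Y Z = 0) (X : V) (i j : Fin p) :
    S.g (S.nabla X (S.ξ i)) (S.ξ j) = 0 := by
  rw [S.nabla_sym hη, S.nabla_xi_xi hη hΦ, S.g_zero_left]

lemma star (hΦ : ∀ X Y Z : V, S.dPhi X Y Z = 0) (i : Fin p) (X Y : V) :
    S.g X (S.N3 i Y) = -S.lieD_g (S.ξ i) X (S.f Y) := by
  have h6 := S.dphi6 hΦ (S.ξ i) X Y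
  simp only [S.f_xi, S.g_zero_right, S.D_zero] at h6
  have h7 : S.g (S.ξ i) (S.f X) = 0 := by rw [S.g_xi, S.eta_f]
  rw [h7, S.D_zero] at h6
  have key : S.D (S.ξ i) (S.g X (S.f Y))
      = S.g (S.bracket (S.ξ i) X) (S.f Y) + S.g (S.bracket Y (S.ξ i)) (S.f X) := by
    linear_combination h6
  unfold N3 lieD_f lieD_g
  rw [S.g_sub_right, key]
  rw [S.bracket_antisymm Y (S.ξ i), S.g_neg_left]
  rw [S.g_symm X (S.f (S.bracket (S.ξ i) Y)), S.g_f_skew]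
  ring

end MetricWeakFStructure

open MetricWeakFStructure

/-- For a weak almost C-structure, `N⁽²⁾ᵢ = 0`, `N⁽⁴⁾ᵢⱼ = 0`,
`N⁽¹⁾ = [f, f]`, and `[ξᵢ, ξⱼ] = 0`; in particular, `ker f` is tangent to a totally
geodesic foliation. Moreover, `N⁽³⁾ᵢ = 0` for all `i` iff each `ξᵢ` is Killing. -/
theorem statement_5 {p : ℕ} {F V : Type*} [CommRing F] [PartialOrder F] [IsOrderedRing F] [Algebra ℝ F]
    [AddCommGroup V] [Module F V] (S : MetricWeakFStructure p F V)
    (hC : S.WeakAlmostC) :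
    (∀ (i : Fin p) (X Y : V), S.N2 i X Y = 0) ∧
    (∀ (i j : Fin p) (X : V), S.N4 i j X = 0) ∧
    (∀ X Y : V, S.N1 X Y = S.nijenhuis X Y) ∧
    (∀ i j : Fin p, S.bracket (S.ξ i) (S.ξ j) = 0) ∧
    (∀ X Y : V, S.f X = 0 → S.f Y = 0 → S.f (S.nabla X Y + S.nabla Y X) = 0) ∧
    ((∀ (i : Fin p) (X : V), S.N3 i X = 0) ↔ ∀ i : Fin p, S.IsKilling (S.ξ i)) := by
  obtain ⟨hΦ, hη⟩ := hC
  have hlie : ∀ (i : Fin p) (U W : V), S.lieD_eta i (S.f U) W = 0 := by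
    intro i U W
    unfold lieD_eta
    rw [S.eta_bracket hη, S.eta_f, S.D_zero, sub_zero, sub_self]
  refine ⟨?_, ?_, ?_, S.bracket_xi hη hΦ,
    fun X Y hX hY => S.tot_geo hη hΦ hX hY, ?_, ?_⟩
  · intro i X Y
    unfold N2
    rw [hlie, hlie, sub_self]
  · intro i j X
    unfold N4 lieD_eta
    rw [S.eta_bracket hη, S.D_eta_xi, sub_zero, sub_self]
  · intro X Y
    unfold N1
    rw [Finset.sum_eq_zero, add_zero]
    intro i _
    rw [hη, mul_zero, zero_smul]
  · -- N3 = 0 → Killing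
    intro hN3 i X Y
    have hnz : ∀ X : V, S.nabla X (S.ξ i) = 0 := by
      intro X
      apply S.eq_zero_of_g_eta
      · intro Z
        have hl : S.lieD_g (S.ξ i) X (S.f Z) = 0 := by
          have hs := S.star hΦ i X Z
          rw [hN3 i Z, S.g_zero_right] at hs
          linear_combination hs
        rw [S.lieg_nabla, S.nabla_sym hη i (S.f Z) X] at hl
        exact cancel_double (F := F) hl
      · intro j
        rw [← S.g_xi, S.g_symm]
        exact S.g_nabla_xi_xi hη hΦ X i j
    rw [S.lieg_nabla, hnz X, hnz Y, S.g_zero_left, S.g_zero_left, add_zero]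
  · -- Killing → N3 = 0
    intro hK i Y
    apply S.g_definite
    have hs := S.star hΦ i (S.N3 i Y) Y
    rw [hK i (S.N3 i Y) (S.f Y), neg_zero] at hs
    exact hs
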